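/- arXiv:1407.2466 — 6 statements merged into one kernel-verified Lean document; each statement's English description precedes it below -/
import Mathlib

section
/- Let (H, ⟨·,·⟩) be an inner product space over 𝕂 (𝕂 = ℝ or ℂ) and e ∈ H with ‖e‖ = 1. If α, β, λ, μ ∈ 𝕂 and x, y ∈ H satisfy Re⟨αe − x, x − βe⟩ ≥ 0 and Re⟨λe − y, y − μe⟩ ≥ 0, then |⟨x, y⟩ − ⟨x, e⟩⟨e, y⟩| ≤ (1/4)|α − β||λ − μ|. -/
/-!
Subtracting the component along `e` turns `⟨x, y⟩ - ⟨x, e⟩⟨e, y⟩` into the inner product of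
`x - ⟨e, x⟩e` and `y - ⟨e, y⟩e`, so by Cauchy–Schwarz it suffices to bound these two norms.
The hypothesis on `x` says that `x` lies in the closed ball with diameter `[αe, βe]`, i.e.
`‖x - (α + β)/2 • e‖ ≤ |α - β| / 2`, and the orthogonal projection `⟨e, x⟩e` is at least as
close to `x` as the centre `(α + β)/2 • e` of that ball.
-/

open RCLike

section

variable {𝕜 H : Type*} [RCLike 𝕜] [NormedAddCommGroup H] [InnerProductSpace 𝕜 H]

local notation "⟪" x ", " y "⟫" => inner 𝕜 x y

lemma re_inner_sub_add (d u : H) : re ⟪d - u, d + u⟫ = ‖d‖ ^ 2 - ‖u‖ ^ 2 := by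
  rw [inner_sub_left, inner_add_right, inner_add_right, inner_self_eq_norm_sq_to_K,
    inner_self_eq_norm_sq_to_K, map_sub, map_add, map_add, inner_re_symm u d]
  simp only [← ofReal_pow, ofReal_re]
  ring

lemma re_inner_sub_sub_eq (a b x : H) :
    re ⟪a - x, x - b⟫ = (‖a - b‖ / 2) ^ 2 - ‖x - (2 : 𝕜)⁻¹ • (a + b)‖ ^ 2 := by
  have hd : ‖(2 : 𝕜)⁻¹ • (a - b)‖ = ‖a - b‖ / 2 := by
    rw [norm_smul, norm_inv, RCLike.norm_two, inv_mul_eq_div]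
  rw [← hd, ← re_inner_sub_add (𝕜 := 𝕜)]
  congr 2 <;> module

lemma norm_sub_midpoint_le_of_re_inner_nonneg {a b x : H} (h : 0 ≤ re ⟪a - x, x - b⟫) :
    ‖x - (2 : 𝕜)⁻¹ • (a + b)‖ ≤ ‖a - b‖ / 2 := by
  rw [re_inner_sub_sub_eq, sub_nonneg] at h
  exact (pow_le_pow_iff_left₀ (norm_nonneg _) (by positivity) two_ne_zero).mp h

lemma norm_sub_inner_smul_le {e : H} (he : ‖e‖ = 1) (x : H) (c : 𝕜) :
    ‖x - ⟪e, x⟫ • e‖ ≤ ‖x - c • e‖ := by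
  rw [← Submodule.starProjection_unit_singleton 𝕜 he, Submodule.starProjection_minimal]
  exact ciInf_le ⟨0, by rintro _ ⟨_, rfl⟩; positivity⟩
    (⟨c • e, Submodule.smul_mem _ _ (Submodule.mem_span_singleton_self e)⟩ : 𝕜 ∙ e)

lemma norm_sub_inner_smul_le_of_re_inner_nonneg {e : H} (he : ‖e‖ = 1) {α β : 𝕜} {x : H}
    (h : 0 ≤ re ⟪α • e - x, x - β • e⟫) : ‖x - ⟪e, x⟫ • e‖ ≤ ‖α - β‖ / 2 :=
  calc ‖x - ⟪e, x⟫ • e‖ ≤ ‖x - (2 : 𝕜)⁻¹ • (α • e + β • e)‖ := by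
        rw [← add_smul, smul_smul]; exact norm_sub_inner_smul_le he x _
    _ ≤ ‖α • e - β • e‖ / 2 := norm_sub_midpoint_le_of_re_inner_nonneg h
    _ = ‖α - β‖ / 2 := by rw [← sub_smul, norm_smul, he, mul_one]

lemma inner_sub_inner_smul_sub_inner_smul {e : H} (he : ‖e‖ = 1) (x y : H) :
    ⟪x - ⟪e, x⟫ • e, y - ⟪e, y⟫ • e⟫ = ⟪x, y⟫ - ⟪x, e⟫ * ⟪e, y⟫ := by
  have hee : ⟪e, e⟫ = 1 := by simp [inner_self_eq_norm_sq_to_K, he]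
  rw [inner_sub_left, inner_sub_right, inner_sub_right, inner_smul_left, inner_smul_left,
    inner_smul_right, inner_smul_right, hee, inner_conj_symm]
  ring

end

/-- Grüss type inequality in inner product spaces. -/
theorem gruss_inner_product {𝕜 H : Type*} [RCLike 𝕜] [NormedAddCommGroup H]
    [InnerProductSpace 𝕜 H] (e : H) (he : ‖e‖ = 1) (α β lam μ : 𝕜) (x y : H)
    (h₁ : 0 ≤ RCLike.re (inner (𝕜 := 𝕜) (α • e - x) (x - β • e)))
    (h₂ : 0 ≤ RCLike.re (inner (𝕜 := 𝕜) (lam • e - y) (y - μ • e))) :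
    ‖(inner (𝕜 := 𝕜) x y : 𝕜) - (inner (𝕜 := 𝕜) x e : 𝕜) * (inner (𝕜 := 𝕜) e y : 𝕜)‖ ≤ 4⁻¹ * ‖α - β‖ * ‖lam - μ‖ := by
  rw [← inner_sub_inner_smul_sub_inner_smul he]
  calc _ ≤ ‖x - inner 𝕜 e x • e‖ * ‖y - inner 𝕜 e y • e‖ := norm_inner_le_norm _ _
    _ ≤ (‖α - β‖ / 2) * (‖lam - μ‖ / 2) := by
        gcongr
        exacts [norm_sub_inner_smul_le_of_re_inner_nonneg he h₁,
          norm_sub_inner_smul_le_of_re_inner_nonneg he h₂]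
    _ = 4⁻¹ * ‖α - β‖ * ‖lam - μ‖ := by ring
end

section
/- Let (H, ⟨·,·⟩) be an inner product space over 𝕂 (𝕂 = ℝ or ℂ) and e ∈ H with ‖e‖ = 1. For α, β ∈ 𝕂 and x ∈ H, the condition Re⟨αe − x, x − βe⟩ ≥ 0 holds if and only if ‖x − ((α + β)/2)e‖ ≤ (1/2)|α − β|. -/
/-!
With `u = a - x` and `v = x - b` one has `a - b = u + v` and `x - (a + b)/2 = (v - u)/2`, so the
parallelogram law gives `Re⟪a - x, x - b⟫ = ‖(a - b)/2‖² - ‖x - (a + b)/2‖²`: the condition says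
that `x` lies in the closed ball with diameter `[a, b]`. Take `a = α e`, `b = β e`.
-/

open RCLike

section

variable {𝕜 E : Type*} [RCLike 𝕜] [NormedAddCommGroup E] [InnerProductSpace 𝕜 E]

theorem re_inner_sub_sub_eq_sq_sub_sq (a b x : E) :
    re (inner 𝕜 (a - x) (x - b)) = (2⁻¹ * ‖a - b‖) ^ 2 - ‖x - (2⁻¹ : 𝕜) • (a + b)‖ ^ 2 := by
  have hab : a - b = (a - x) + (x - b) := by abel
  have hmid : x - (2⁻¹ : 𝕜) • (a + b) = (2⁻¹ : 𝕜) • ((x - b) - (a - x)) := by module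
  rw [hab, hmid, norm_smul, norm_inv, RCLike.norm_two]
  generalize a - x = u, x - b = v
  rw [mul_pow, mul_pow, @norm_add_sq 𝕜, @norm_sub_sq 𝕜, ← inner_re_symm (𝕜 := 𝕜) v]
  ring

theorem re_inner_sub_sub_nonneg_iff (a b x : E) :
    0 ≤ re (inner 𝕜 (a - x) (x - b)) ↔ ‖x - (2⁻¹ : 𝕜) • (a + b)‖ ≤ 2⁻¹ * ‖a - b‖ := by
  rw [re_inner_sub_sub_eq_sq_sub_sq, sub_nonneg]
  exact pow_le_pow_iff_left₀ (norm_nonneg _) (by positivity) two_ne_zero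

end

/-- Equivalence of the two "ball" conditions in inner product spaces. -/
theorem gruss_condition_equiv {𝕜 H : Type*} [RCLike 𝕜] [NormedAddCommGroup H]
    [InnerProductSpace 𝕜 H] (e : H) (he : ‖e‖ = 1) (α β : 𝕜) (x : H) :
    0 ≤ RCLike.re (inner (𝕜 := 𝕜) (α • e - x) (x - β • e)) ↔
      ‖x - ((α + β) / 2) • e‖ ≤ 2⁻¹ * ‖α - β‖ := by
  have hdiam : ‖α • e - β • e‖ = ‖α - β‖ := by rw [← sub_smul, norm_smul, he, mul_one]
  have hcenter : (2⁻¹ : 𝕜) • (α • e + β • e) = ((α + β) / 2) • e := by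
    rw [← add_smul, smul_smul, inv_mul_eq_div]
  rw [re_inner_sub_sub_nonneg_iff, hdiam, hcenter]
end

section
/- Let 𝒜 be a C*-algebra, X a Hilbert 𝒜-module, and μ a probability measure on a measurable space Ω. If f ∈ L₂(Ω, X) and a ∈ X, then ∫_Ω |f(t)|² dμ(t) − |∫_Ω f(t) dμ(t)|² ≤ ∫_Ω |f(t) − a|² dμ(t), where the inequality is in the order of positive elements of 𝒜. -/
open MeasureTheory
open scoped RightActions

/-- The Dec-2024 Mathlib `CStarModule` (right Hilbert module, `⟪x, y <• a⟫ = ⟪x, y⟫ * a`),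
restated since Mathlib's `CStarModule` now uses a left action. -/
class CStarModuleOld (A E : Type*) [NonUnitalSemiring A] [StarRing A] [Module ℂ A]
    [AddCommGroup E] [Module ℂ E] [PartialOrder A] [SMul Aᵐᵒᵖ E] [Norm A] [Norm E]
    extends Inner A E where
  inner_add_right {x} {y} {z} : inner x (y + z) = inner x y + inner x z
  inner_self_nonneg {x} : 0 ≤ inner x x
  inner_self {x} : inner x x = 0 ↔ x = 0
  inner_op_smul_right {a : A} {x y : E} : inner x (y <• a) = inner x y * a
  inner_smul_right_complex {z : ℂ} {x} {y} : inner x (z • y) = z • inner x y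
  star_inner x y : star (inner x y) = inner y x
  norm_eq_sqrt_norm_inner_self x : ‖x‖ = √‖inner x x‖

/-! Writing `m = ∫ f`, integrating the pointwise expansion of `⟪f - a, f - a⟫` gives the
decomposition `∫ ⟪f - a, f - a⟫ = (∫ ⟪f, f⟫ - ⟪m, m⟫) + ⟪m - a, m - a⟫`, and the last term is
positive. A right Hilbert `A`-module is a Hilbert module over `Aᵐᵒᵖ` in Mathlib's sense, with
inner product `op ⟪·, ·⟫`; this supplies the continuity of the inner product needed to pass it
through the Bochner integral. -/

namespace CStarModule

variable {B E : Type*} [NonUnitalCStarAlgebra B] [PartialOrder B] [SMul B E]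
  [NormedAddCommGroup E] [NormedSpace ℂ E] [CStarModule B E]

local notation "⟪" x ", " y "⟫" => inner B x y

lemma inner_sub_sub_self (x a : E) : ⟪x - a, x - a⟫ = ⟪x, x⟫ - ⟪x, a⟫ - ⟪a, x⟫ + ⟪a, a⟫ := by
  simp only [inner_sub_left, inner_sub_right]
  abel

variable [StarOrderedRing B] {Ω : Type*} [MeasurableSpace Ω] {μ : Measure Ω} {f : Ω → E}

lemma _root_.MeasureTheory.MemLp.integrable_inner_self (hf : MemLp f 2 μ) :
    Integrable (fun t => ⟪f t, f t⟫) μ := by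
  refine (hf.integrable_norm_pow two_ne_zero).mono' ?_ (.of_forall fun t => ?_)
  · exact continuous_inner.comp_aestronglyMeasurable (hf.1.prodMk hf.1)
  · rw [← norm_sq_eq]

variable [CompleteSpace E]

lemma integral_inner_right (hf : Integrable f μ) (a : E) :
    ∫ t, ⟪a, f t⟫ ∂μ = ⟪a, ∫ t, f t ∂μ⟫ :=
  (innerSL (A := B) a).integral_comp_comm hf

lemma integral_inner_left (hf : Integrable f μ) (a : E) :
    ∫ t, ⟪f t, a⟫ ∂μ = ⟪∫ t, f t ∂μ, a⟫ :=
  ((innerSL (A := B)).flip a).integral_comp_commSL (by simp) hf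

lemma integral_inner_sub_sub_self [IsProbabilityMeasure μ] (hf : MemLp f 2 μ) (a : E) :
    ∫ t, ⟪f t - a, f t - a⟫ ∂μ =
      ∫ t, ⟪f t, f t⟫ ∂μ - ⟪∫ t, f t ∂μ, ∫ t, f t ∂μ⟫
        + ⟪∫ t, f t ∂μ - a, ∫ t, f t ∂μ - a⟫ := by
  have hf₁ : Integrable f μ := hf.integrable one_le_two
  have hfa : Integrable (fun t => ⟪f t, a⟫) μ := ((innerSL (A := B)).flip a).integrable_comp hf₁
  have haf : Integrable (fun t => ⟪a, f t⟫) μ := (innerSL (A := B) a).integrable_comp hf₁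
  have hff_sub : Integrable (fun t => ⟪f t, f t⟫ - ⟪f t, a⟫) μ := hf.integrable_inner_self.sub hfa
  have hff_sub_sub : Integrable (fun t => ⟪f t, f t⟫ - ⟪f t, a⟫ - ⟪a, f t⟫) μ := hff_sub.sub haf
  simp_rw [inner_sub_sub_self]
  rw [integral_add hff_sub_sub (integrable_const _), integral_sub hff_sub haf,
    integral_sub hf.integrable_inner_self hfa,
    integral_inner_left hf₁, integral_inner_right hf₁, integral_const, probReal_univ, one_smul]
  abel

theorem integral_inner_self_sub_inner_integral_le [IsProbabilityMeasure μ] (hf : MemLp f 2 μ)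
    (a : E) :
    ∫ t, ⟪f t, f t⟫ ∂μ - ⟪∫ t, f t ∂μ, ∫ t, f t ∂μ⟫ ≤ ∫ t, ⟪f t - a, f t - a⟫ ∂μ := by
  rw [integral_inner_sub_sub_self hf]
  exact le_add_of_nonneg_right inner_self_nonneg

end CStarModule

lemma MeasureTheory.integral_op {Ω E : Type*} [MeasurableSpace Ω] {μ : Measure Ω}
    [NormedAddCommGroup E] [NormedSpace ℝ E] (g : Ω → E) :
    ∫ t, MulOpposite.op (g t) ∂μ = MulOpposite.op (∫ t, g t ∂μ) :=
  (MulOpposite.opContinuousLinearEquiv ℝ).integral_comp_comm g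

namespace CStarModuleOld

instance toCStarModuleMulOpposite {A : Type*} [NonUnitalCStarAlgebra A] [PartialOrder A]
    {X : Type*} [NormedAddCommGroup X] [NormedSpace ℂ X] [SMul Aᵐᵒᵖ X] [CStarModuleOld A X] :
    CStarModule Aᵐᵒᵖ X where
  inner x y := MulOpposite.op (inner A x y)
  inner_add_right {x y z} := by rw [inner_add_right, MulOpposite.op_add]
  inner_self_nonneg := MulOpposite.op_le_op.mpr (inner_self_nonneg (A := A))
  inner_self := MulOpposite.op_eq_zero_iff _ |>.trans (inner_self (A := A))
  inner_op_smul_right {a x y} := by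
    change MulOpposite.op (inner A x (y <• a.unop)) = _
    rw [inner_op_smul_right, MulOpposite.op_mul, MulOpposite.op_unop]
  inner_smul_right_complex {z x y} := by rw [inner_smul_right_complex, MulOpposite.op_smul]
  star_inner x y := by rw [← MulOpposite.op_star, star_inner]
  norm_eq_sqrt_norm_inner_self x := by
    rw [MulOpposite.norm_op, norm_eq_sqrt_norm_inner_self (A := A) x]

end CStarModuleOld

/-- For a Hilbert C*-module valued function `f` and any `a ∈ X`,
`∫ |f|² dμ − |∫ f dμ|² ≤ ∫ |f − a|² dμ` in the order of the C*-algebra `A`. -/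
theorem gruss_self_functional_le {A : Type*} [NonUnitalCStarAlgebra A]
    [PartialOrder A] [StarOrderedRing A]
    {X : Type*} [NormedAddCommGroup X] [NormedSpace ℂ X] [SMul Aᵐᵒᵖ X] [CStarModuleOld A X]
    [CompleteSpace X]
    {Ω : Type*} [MeasurableSpace Ω] (μ : Measure Ω) [IsProbabilityMeasure μ]
    (f : Ω → X) (hf : MemLp f 2 μ) (a : X) :
    (∫ t, (inner A (f t) (f t) : A) ∂μ) - (inner A (∫ t, f t ∂μ) (∫ t, f t ∂μ) : A) ≤
      ∫ t, (inner A (f t - a) (f t - a) : A) ∂μ := by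
  have h := CStarModule.integral_inner_self_sub_inner_integral_le (B := Aᵐᵒᵖ) hf a
  change ∫ t, MulOpposite.op _ ∂μ - MulOpposite.op _ ≤ ∫ t, MulOpposite.op _ ∂μ at h
  rwa [integral_op, integral_op, ← MulOpposite.op_sub, MulOpposite.op_le_op] at h
end

section
/- Let 𝒜 be a C*-algebra, X a Hilbert 𝒜-module, and μ a probability measure on a measurable space Ω. For every f ∈ L₂(Ω, X), the element ∫_Ω |f(t)|² dμ(t) − |∫_Ω f(t) dμ(t)|² is a positive element of 𝒜. -/
/-! Writing `m = ∫ f dμ`, the element `∫ ⟪f - m, f - m⟫ dμ` is an integral of positive elements,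
hence positive because the positive cone of `A` is closed and convex. Since `μ` is a probability
measure and `∫ ⟪x, f⟫ dμ = ⟪x, m⟫`, expanding it gives `∫ ⟪f, f⟫ dμ - ⟪m, m⟫`. The integrability
of `⟪f, f⟫` for `f ∈ L₂` uses the continuity of the inner product, i.e. the `A`-valued
Cauchy–Schwarz inequality. -/

open MeasureTheory
open scoped RightActions

/-- The Hilbert C*-module class as Mathlib (Dec 2024) defined `CStarModule`: a *right* module
(action of `Aᵐᵒᵖ`) with `⟪x, y <• a⟫ = ⟪x, y⟫ * a`. Mathlib's current `CStarModule` uses a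
left action with another axiom, so the old notion is restated here. -/
class RightCStarModule (A : outParam <| Type*) (E : Type*) [NonUnitalSemiring A] [StarRing A]
    [Module ℂ A] [AddCommGroup E] [Module ℂ E] [PartialOrder A] [SMul Aᵐᵒᵖ E] [Norm A] [Norm E]
    extends Inner A E where
  inner_add_right {x} {y} {z} : inner x (y + z) = inner x y + inner x z
  inner_self_nonneg {x} : 0 ≤ inner x x
  inner_self {x} : inner x x = 0 ↔ x = 0
  inner_op_smul_right {a : A} {x y : E} : inner x (y <• a) = inner x y * a
  inner_smul_right_complex {z : ℂ} {x} {y} : inner x (z • y) = z • inner x y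
  star_inner x y : star (inner x y) = inner y x
  norm_eq_sqrt_norm_inner_self x : ‖x‖ = √‖inner x x‖

namespace RightCStarModule

section Algebra

variable {A E : Type*} [NonUnitalRing A] [StarRing A] [Module ℂ A]
  [PartialOrder A] [Norm A] [AddCommGroup E] [Module ℂ E] [SMul Aᵐᵒᵖ E] [Norm E]
  [RightCStarModule A E]

lemma inner_add_left {x y z : E} : inner A (x + y) z = inner A x z + inner A y z := by
  rw [← star_inner z, inner_add_right, star_add, star_inner, star_inner]

lemma inner_op_smul_left {a : A} {x y : E} : inner A (x <• a) y = star a * inner A x y := by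
  rw [← star_inner y, inner_op_smul_right, star_mul, star_inner]

lemma inner_smul_right_real {r : ℝ} {x y : E} : inner A x (r • y) = r • inner A x y := by
  rw [← Complex.coe_smul, inner_smul_right_complex, Complex.coe_smul]

variable [StarModule ℂ A]

lemma inner_smul_left_complex {z : ℂ} {x y : E} : inner A (z • x) y = star z • inner A x y := by
  rw [← star_inner y, inner_smul_right_complex, star_smul, star_inner]

lemma inner_smul_left_real {r : ℝ} {x y : E} : inner A (r • x) y = r • inner A x y := by
  rw [← star_inner y, inner_smul_right_real, star_smul, star_trivial, star_inner]

def innerₛₗ : E →ₗ⋆[ℂ] E →ₗ[ℂ] A where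
  toFun x :=
    { toFun := fun y => inner A x y
      map_add' := fun _ _ => inner_add_right
      map_smul' := fun _ _ => inner_smul_right_complex }
  map_add' _ _ := LinearMap.ext fun _ => inner_add_left
  map_smul' _ _ := LinearMap.ext fun _ => inner_smul_left_complex

lemma inner_zero_right {x : E} : inner A x 0 = 0 := (innerₛₗ x).map_zero

lemma inner_zero_left {x : E} : inner A 0 x = 0 := LinearMap.congr_fun innerₛₗ.map_zero x

lemma inner_sub_right {x y z : E} : inner A x (y - z) = inner A x y - inner A x z :=
  (innerₛₗ x).map_sub y z

lemma inner_sub_left {x y z : E} : inner A (x - y) z = inner A x z - inner A y z :=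
  LinearMap.congr_fun (innerₛₗ.map_sub x y) z

end Algebra

section Analysis

variable {A E : Type*} [NonUnitalCStarAlgebra A] [PartialOrder A]
  [NormedAddCommGroup E] [NormedSpace ℂ E] [SMul Aᵐᵒᵖ E] [RightCStarModule A E]

lemma norm_sq_eq {x : E} : ‖x‖ ^ 2 = ‖inner A x x‖ := by
  rw [norm_eq_sqrt_norm_inner_self (A := A), Real.sq_sqrt (norm_nonneg _)]

variable [StarOrderedRing A]

lemma inner_mul_inner_swap_le {x y : E} : inner A y x * inner A x y ≤ ‖x‖ ^ 2 • inner A y y := by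
  rcases eq_or_ne x 0 with rfl | hx
  · simp [inner_zero_left, inner_zero_right]
  -- expand `0 ≤ ⟪x <• b - ‖x‖² • y, x <• b - ‖x‖² • y⟫` and take `b = ⟪x, y⟫`
  have key (b : A) : (0 : A) ≤ ‖x‖ ^ 2 • (star b * b) - ‖x‖ ^ 2 • (star b * inner A x y)
      - ‖x‖ ^ 2 • (inner A y x * b) + ‖x‖ ^ 2 • (‖x‖ ^ 2 • inner A y y) :=
    calc (0 : A) ≤ inner A (x <• b - ‖x‖ ^ 2 • y) (x <• b - ‖x‖ ^ 2 • y) := inner_self_nonneg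
      _ = star b * inner A x x * b - ‖x‖ ^ 2 • (star b * inner A x y)
            - ‖x‖ ^ 2 • (inner A y x * b) + ‖x‖ ^ 2 • (‖x‖ ^ 2 • inner A y y) := by
        simp only [inner_sub_right, inner_op_smul_right, inner_sub_left, inner_op_smul_left,
          inner_smul_left_real, inner_smul_right_real, smul_mul_assoc,
          smul_sub, sub_mul, mul_assoc]
        abel
      _ ≤ _ := by
        gcongr
        calc _ ≤ ‖inner A x x‖ • (star b * b) :=
              CStarAlgebra.star_left_conjugate_le_norm_smul (hb := star_inner x x)
          _ = ‖x‖ ^ 2 • (star b * b) := by rw [norm_sq_eq]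
  specialize key (inner A x y)
  simp only [star_inner, sub_self, zero_sub, le_neg_add_iff_add_le, add_zero] at key
  rwa [smul_le_smul_iff_of_pos_left (pow_pos (norm_pos_iff.mpr hx) _)] at key

lemma norm_inner_le {x y : E} : ‖inner A x y‖ ≤ ‖x‖ * ‖y‖ := by
  refine le_of_sq_le_sq ?_ (by positivity)
  calc ‖inner A x y‖ ^ 2 = ‖inner A y x * inner A x y‖ := by
        rw [← star_inner x y, CStarRing.norm_star_mul_self, pow_two]
    _ ≤ ‖‖x‖ ^ 2 • inner A y y‖ := by
        refine CStarAlgebra.norm_le_norm_of_nonneg_of_le ?_ inner_mul_inner_swap_le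
        rw [← star_inner x y]
        exact star_mul_self_nonneg _
    _ = (‖x‖ * ‖y‖) ^ 2 := by rw [norm_smul, ← norm_sq_eq (x := y)]; simp [mul_pow]

noncomputable def innerSL : E →L⋆[ℂ] E →L[ℂ] A :=
  LinearMap.mkContinuous₂ innerₛₗ 1 fun x y => by
    simpa [innerₛₗ] using norm_inner_le (x := x) (y := y)

section Integral

variable {Ω : Type*} [MeasurableSpace Ω] {μ : Measure Ω} {f : Ω → E}

lemma integrable_const_inner (hf : Integrable f μ) (x : E) :
    Integrable (fun t => inner A x (f t)) μ :=
  (innerSL (A := A) x).integrable_comp hf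

lemma integrable_inner_const (hf : Integrable f μ) (x : E) :
    Integrable (fun t => inner A (f t) x) μ :=
  ((innerSL (A := A)).flip x).integrable_comp hf

lemma integrable_inner_self (hf : MemLp f 2 μ) : Integrable (fun t => inner A (f t) (f t)) μ := by
  have hmeas : AEStronglyMeasurable (fun t => inner A (f t) (f t)) μ :=
    Continuous.comp_aestronglyMeasurable₂ (g := fun x y => innerSL (A := A) x y)
      (by fun_prop) hf.1 hf.1
  refine (integrable_norm_iff hmeas).1 ?_
  simpa only [← norm_sq_eq] using (memLp_two_iff_integrable_sq_norm hf.1).1 hf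

variable [CompleteSpace E]

lemma integral_const_inner (hf : Integrable f μ) (x : E) :
    ∫ t, inner A x (f t) ∂μ = inner A x (∫ t, f t ∂μ) :=
  (innerSL (A := A) x).integral_comp_comm hf

lemma integral_inner_const (hf : Integrable f μ) (x : E) :
    ∫ t, inner A (f t) x ∂μ = inner A (∫ t, f t ∂μ) x :=
  ((innerSL (A := A)).flip x).integral_comp_commSL (by simp) hf

lemma integral_inner_sub_integral_self [IsProbabilityMeasure μ] (hf : MemLp f 2 μ) :
    ∫ t, inner A (f t - ∫ s, f s ∂μ) (f t - ∫ s, f s ∂μ) ∂μ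
      = ∫ t, inner A (f t) (f t) ∂μ - inner A (∫ t, f t ∂μ) (∫ t, f t ∂μ) := by
  set m := ∫ t, f t ∂μ
  have hf₁ : Integrable f μ := hf.integrable one_le_two
  have expand (t : Ω) : inner A (f t - m) (f t - m)
      = inner A (f t) (f t) - inner A (f t) m - inner A m (f t) + inner A m m := by
    simp only [inner_sub_left, inner_sub_right]
    abel
  have h₁ : Integrable (fun t => inner A (f t) (f t) - inner A (f t) m) μ :=
    (integrable_inner_self hf).sub (integrable_inner_const hf₁ m)
  have h₂ : Integrable (fun t => inner A (f t) (f t) - inner A (f t) m - inner A m (f t)) μ :=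
    h₁.sub (integrable_const_inner hf₁ m)
  simp only [expand]
  rw [integral_add h₂ (integrable_const _), integral_sub h₁ (integrable_const_inner hf₁ m),
    integral_sub (integrable_inner_self hf) (integrable_inner_const hf₁ m),
    integral_const_inner hf₁, integral_inner_const hf₁, integral_const, probReal_univ, one_smul]
  abel

end Integral

end Analysis

end RightCStarModule

/-- For every `f ∈ L₂(Ω, X)`, the element `∫ |f|² dμ − |∫ f dμ|²` is a positive element
of the C*-algebra `A`. -/
theorem gruss_self_functional_nonneg {A : Type*} [NonUnitalCStarAlgebra A]
    [PartialOrder A] [StarOrderedRing A]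
    {X : Type*} [NormedAddCommGroup X] [NormedSpace ℂ X] [SMul Aᵐᵒᵖ X] [RightCStarModule A X]
    [CompleteSpace X]
    {Ω : Type*} [MeasurableSpace Ω] (μ : Measure Ω) [IsProbabilityMeasure μ]
    (f : Ω → X) (hf : MemLp f 2 μ) :
    0 ≤ (∫ t, (inner A (f t) (f t) : A) ∂μ) - (inner A (∫ t, f t ∂μ) (∫ t, f t ∂μ) : A) := by
  rw [← RightCStarModule.integral_inner_sub_integral_self hf]
  exact integral_nonneg fun _ => RightCStarModule.inner_self_nonneg
end

section
/- Let 𝒜 be a C*-algebra, X a Hilbert 𝒜-module, and μ a probability measure on a measurable space Ω. If f ∈ L₂(Ω, X) and x, x' ∈ X satisfy ∫_Ω Re⟨x' − f(t), f(t) − x⟩ dμ(t) ≥ 0, then in the order of 𝒜: ∫_Ω |f(t)|² dμ(t) − |∫_Ω f(t) dμ(t)|² ≤ ∫_Ω |f(t) − (x' + x)/2|² dμ(t) = (1/4)|x' − x|² − ∫_Ω Re⟨x' − f(t), f(t) − x⟩ dμ(t) ≤ (1/4)|x' − x|². -/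
open MeasureTheory
open scoped RightActions

/-- The notion `CStarModule` of the older Mathlib (right Hilbert `A`-modules, with
`⟪x, y <• a⟫ = ⟪x, y⟫ * a`); Mathlib's `CStarModule` now describes left modules. -/
class CStarModuleRight (A : outParam <| Type*) (E : Type*) [NonUnitalSemiring A] [StarRing A]
    [Module ℂ A] [AddCommGroup E] [Module ℂ E] [PartialOrder A] [SMul Aᵐᵒᵖ E] [Norm A] [Norm E]
    extends Inner A E where
  inner_add_right {x} {y} {z} : inner x (y + z) = inner x y + inner x z
  inner_self_nonneg {x} : 0 ≤ inner x x
  inner_self {x} : inner x x = 0 ↔ x = 0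
  inner_op_smul_right {a : A} {x y : E} : inner x (y <• a) = inner x y * a
  inner_smul_right_complex {z : ℂ} {x} {y} : inner x (z • y) = z • inner x y
  star_inner x y : star (inner x y) = inner y x
  norm_eq_sqrt_norm_inner_self x : ‖x‖ = √‖inner x x‖

/-! With `c = (x' + x)/2`, expanding `|y - c|²` gives `¼|x' - x|² - Re⟨x' - y, y - x⟩` pointwise,
which integrates to the middle identity; the last inequality is the hypothesis. For the first,
integrating the expansion of `|f - c|²` and moving `⟨c, ·⟩` through the integral gives
`∫|f - c|² = (∫|f|² - |∫f|²) + |∫f - c|²`. -/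

open scoped InnerProductSpace

namespace CStarModuleRight

open MulOpposite

section Algebra

variable {A : Type*} [NonUnitalCStarAlgebra A] [PartialOrder A]
  {X : Type*} [AddCommGroup X] [Module ℂ X] [SMul Aᵐᵒᵖ X] [Norm X] [CStarModuleRight A X]

/-- `⟪x, y <• a⟫ = ⟪x, y⟫ * a` reads `⟪x, a • y⟫ = a * ⟪x, y⟫` in `Aᵐᵒᵖ`, so Mathlib's theory of
Hilbert C⋆-modules applies over `Aᵐᵒᵖ`. -/
instance toCStarModuleMulOpposite : CStarModule Aᵐᵒᵖ X where
  inner x y := op ⟪x, y⟫_A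
  inner_add_right := congrArg op inner_add_right
  inner_self_nonneg := inner_self_nonneg
  inner_self := op_eq_zero_iff _ |>.trans inner_self
  inner_op_smul_right := congrArg op inner_op_smul_right
  inner_smul_right_complex := congrArg op inner_smul_right_complex
  star_inner x y := congrArg op (star_inner x y)
  norm_eq_sqrt_norm_inner_self := norm_eq_sqrt_norm_inner_self (A := A)

lemma inner_eq_unop_inner (x y : X) : ⟪x, y⟫_A = unop ⟪x, y⟫_Aᵐᵒᵖ := rfl

lemma inner_add_left (x y z : X) : ⟪x + y, z⟫_A = ⟪x, z⟫_A + ⟪y, z⟫_A := by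
  simp [inner_eq_unop_inner]

lemma inner_sub_left (x y z : X) : ⟪x - y, z⟫_A = ⟪x, z⟫_A - ⟪y, z⟫_A := by
  simp [inner_eq_unop_inner]

lemma inner_sub_right (x y z : X) : ⟪x, y - z⟫_A = ⟪x, y⟫_A - ⟪x, z⟫_A := by
  simp [inner_eq_unop_inner]

lemma inner_smul_left_real (r : ℝ) (x y : X) : ⟪r • x, y⟫_A = r • ⟪x, y⟫_A := by
  simp [inner_eq_unop_inner]

lemma inner_smul_right_real (r : ℝ) (x y : X) : ⟪x, r • y⟫_A = r • ⟪x, y⟫_A := by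
  simp [inner_eq_unop_inner]

lemma inner_sub_sub_self (x y : X) :
    ⟪x - y, x - y⟫_A = ⟪x, x⟫_A - ⟪x, y⟫_A - ⟪y, x⟫_A + ⟪y, y⟫_A := by
  simp only [inner_sub_left, inner_sub_right]
  abel

lemma inner_sub_midpoint_self (x x' y : X) :
    ⟪y - (2 : ℝ)⁻¹ • (x' + x), y - (2 : ℝ)⁻¹ • (x' + x)⟫_A =
      (4 : ℝ)⁻¹ • ⟪x' - x, x' - x⟫_A -
        (2 : ℝ)⁻¹ • (⟪x' - y, y - x⟫_A + star ⟪x' - y, y - x⟫_A) := by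
  simp only [inner_sub_left, inner_sub_right, inner_add_left, inner_add_right,
    inner_smul_left_real, inner_smul_right_real, star_sub, star_inner, smul_add, smul_sub,
    smul_smul]
  module

variable [StarOrderedRing A]

lemma norm_inner_le (x y : X) : ‖⟪x, y⟫_A‖ ≤ ‖x‖ * ‖y‖ :=
  CStarModule.norm_inner_le X (A := Aᵐᵒᵖ)

end Algebra

section Integral

variable {A : Type*} [NonUnitalCStarAlgebra A] [PartialOrder A] [StarOrderedRing A]
  {X : Type*} [NormedAddCommGroup X] [NormedSpace ℂ X] [SMul Aᵐᵒᵖ X] [CStarModuleRight A X]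
  {Ω : Type*} [MeasurableSpace Ω] {μ : Measure Ω}

lemma continuous_inner : Continuous fun p : X × X => ⟪p.1, p.2⟫_A :=
  continuous_unop.comp CStarModule.continuous_inner

lemma integrable_inner {f g : Ω → X} (hf : MemLp f 2 μ) (hg : MemLp g 2 μ) :
    Integrable (fun t => ⟪f t, g t⟫_A) μ :=
  memLp_one_iff_integrable.1 <| MemLp.of_bilin (fun x y => ⟪x, y⟫_A) 1 hf hg
    (continuous_inner.comp_aestronglyMeasurable (hf.1.prodMk hg.1))
    (.of_forall fun t => by simpa [← NNReal.coe_le_coe] using norm_inner_le (f t) (g t))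

lemma integral_inner_sub_midpoint_self [IsProbabilityMeasure μ] {f : Ω → X} (hf : MemLp f 2 μ)
    (x x' : X) :
    ∫ t, ⟪f t - (2 : ℝ)⁻¹ • (x' + x), f t - (2 : ℝ)⁻¹ • (x' + x)⟫_A ∂μ =
      (4 : ℝ)⁻¹ • ⟪x' - x, x' - x⟫_A -
        ∫ t, (2 : ℝ)⁻¹ • (⟪x' - f t, f t - x⟫_A + star ⟪x' - f t, f t - x⟫_A) ∂μ := by
  set c : X := (2 : ℝ)⁻¹ • (x' + x)
  have hfc : Integrable (fun t => ⟪f t - c, f t - c⟫_A) μ :=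
    integrable_inner (hf.sub (memLp_const c)) (hf.sub (memLp_const c))
  have hre (t : Ω) : (2 : ℝ)⁻¹ • (⟪x' - f t, f t - x⟫_A + star ⟪x' - f t, f t - x⟫_A) =
      (4 : ℝ)⁻¹ • ⟪x' - x, x' - x⟫_A - ⟪f t - c, f t - c⟫_A := by
    rw [inner_sub_midpoint_self, sub_sub_cancel]
  simp_rw [hre]
  rw [integral_sub (integrable_const _) hfc, integral_const, probReal_univ, one_smul,
    sub_sub_cancel]

variable [CompleteSpace X]

lemma integral_const_inner {f : Ω → X} (hf : Integrable f μ) (c : X) :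
    ∫ t, ⟪c, f t⟫_A ∂μ = ⟪c, ∫ t, f t ∂μ⟫_A := by
  have h := (opContinuousLinearEquiv ℝ : A ≃L[ℝ] Aᵐᵒᵖ).symm.integral_comp_comm (μ := μ)
    fun t => CStarModule.innerSL (A := Aᵐᵒᵖ) c (f t)
  rwa [(CStarModule.innerSL (A := Aᵐᵒᵖ) c).integral_comp_comm hf] at h

lemma integral_inner_const {f : Ω → X} (hf : Integrable f μ) (c : X) :
    ∫ t, ⟪f t, c⟫_A ∂μ = ⟪∫ t, f t ∂μ, c⟫_A := by
  simp_rw [← star_inner c, ← integral_const_inner hf c]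
  exact (starL' ℝ : A ≃L[ℝ] A).integral_comp_comm _

variable [IsProbabilityMeasure μ]

theorem integral_inner_sub_const_self {f : Ω → X} (hf : MemLp f 2 μ) (c : X) :
    ∫ t, ⟪f t - c, f t - c⟫_A ∂μ =
      (∫ t, ⟪f t, f t⟫_A ∂μ - ⟪∫ t, f t ∂μ, ∫ t, f t ∂μ⟫_A) +
        ⟪∫ t, f t ∂μ - c, ∫ t, f t ∂μ - c⟫_A := by
  have hfi : Integrable f μ := hf.integrable one_le_two
  have hff := integrable_inner hf hf
  have hfc := integrable_inner hf (memLp_const c)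
  have hcf := integrable_inner (memLp_const c) hf
  have hff_fc : Integrable (fun t => ⟪f t, f t⟫_A - ⟪f t, c⟫_A) μ := hff.sub hfc
  have hff_fc_cf : Integrable (fun t => ⟪f t, f t⟫_A - ⟪f t, c⟫_A - ⟪c, f t⟫_A) μ :=
    hff_fc.sub hcf
  simp_rw [inner_sub_sub_self]
  rw [integral_add hff_fc_cf (integrable_const _), integral_sub hff_fc hcf,
    integral_sub hff hfc, integral_inner_const hfi, integral_const_inner hfi, integral_const,
    probReal_univ, one_smul]
  abel

theorem integral_inner_self_sub_inner_integral_le {f : Ω → X} (hf : MemLp f 2 μ) (c : X) :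
    ∫ t, ⟪f t, f t⟫_A ∂μ - ⟪∫ t, f t ∂μ, ∫ t, f t ∂μ⟫_A ≤ ∫ t, ⟪f t - c, f t - c⟫_A ∂μ := by
  rw [integral_inner_sub_const_self hf c]
  exact le_add_of_nonneg_right inner_self_nonneg

end Integral

end CStarModuleRight

/-- Under the condition `∫ Re⟨x' − f(t), f(t) − x⟩ dμ ≥ 0`, in the order of the C*-algebra `A`:
`∫ |f|² dμ − |∫ f dμ|² ≤ ∫ |f − (x'+x)/2|² dμ
  = (1/4)|x'−x|² − ∫ Re⟨x' − f(t), f(t) − x⟩ dμ ≤ (1/4)|x'−x|²`. -/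
theorem gruss_chain_cstarModule {A : Type*} [NonUnitalCStarAlgebra A]
    [PartialOrder A] [StarOrderedRing A]
    {X : Type*} [NormedAddCommGroup X] [NormedSpace ℂ X] [SMul Aᵐᵒᵖ X] [CStarModuleRight A X]
    [CompleteSpace X]
    {Ω : Type*} [MeasurableSpace Ω] (μ : Measure Ω) [IsProbabilityMeasure μ]
    (f : Ω → X) (hf : MemLp f 2 μ) (x x' : X)
    (h : 0 ≤ ∫ t, (2 : ℝ)⁻¹ • ((inner A (x' - f t) (f t - x) : A) +
          star (inner A (x' - f t) (f t - x) : A)) ∂μ) :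
    (∫ t, (inner A (f t) (f t) : A) ∂μ) - (inner A (∫ t, f t ∂μ) (∫ t, f t ∂μ) : A) ≤
        (∫ t, (inner A (f t - (2 : ℝ)⁻¹ • (x' + x)) (f t - (2 : ℝ)⁻¹ • (x' + x)) : A) ∂μ) ∧
      (∫ t, (inner A (f t - (2 : ℝ)⁻¹ • (x' + x)) (f t - (2 : ℝ)⁻¹ • (x' + x)) : A) ∂μ) =
        (4 : ℝ)⁻¹ • (inner A (x' - x) (x' - x) : A) -
          (∫ t, (2 : ℝ)⁻¹ • ((inner A (x' - f t) (f t - x) : A) +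
            star (inner A (x' - f t) (f t - x) : A)) ∂μ) ∧
      (4 : ℝ)⁻¹ • (inner A (x' - x) (x' - x) : A) -
          (∫ t, (2 : ℝ)⁻¹ • ((inner A (x' - f t) (f t - x) : A) +
            star (inner A (x' - f t) (f t - x) : A)) ∂μ) ≤
        (4 : ℝ)⁻¹ • (inner A (x' - x) (x' - x) : A) :=
  ⟨CStarModuleRight.integral_inner_self_sub_inner_integral_le hf _,
    CStarModuleRight.integral_inner_sub_midpoint_self hf x x', sub_le_self _ h⟩
end

section
/- Let Ω = [0,1] with Lebesgue measure and let f = g : [0,1] → ℂ be given by f(t) = −1 for 0 ≤ t ≤ 1/2 and f(t) = 1 for 1/2 < t ≤ 1, and set x' = y' = 1, x = y = −1. Then ∫₀¹ Re((x' − f(t))·conj(f(t) − x)) dt ≥ 0, and |∫₀¹ f(t)·conj(g(t)) dt − (∫₀¹ f(t) dt)·conj(∫₀¹ g(t) dt)| = 1 = (1/4)|x' − x||y' − y|; hence the constant 1/4 in the Grüss-type inequality for Hilbert C*-modules cannot be replaced by a smaller constant. -/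
/-!
Since `|f| = 1` on `[0,1]`, the integrand of the condition is `1 - |f t|² = 0` and
`∫ f * conj f = 1`, while `f` has mean zero, so the Grüss functional equals `1`.
-/

open MeasureTheory Set ComplexConjugate

theorem Complex.re_sub_mul_conj_sub_neg (a z : ℂ) :
    ((a - z) * conj (z - -a)).re = ‖a‖ ^ 2 - ‖z‖ ^ 2 := by
  simp only [sub_neg_eq_add, map_add, Complex.mul_re, Complex.sub_re, Complex.sub_im,
    Complex.add_re, Complex.add_im, Complex.conj_re, Complex.conj_im, Complex.sq_norm,
    Complex.normSq_apply]
  ring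

theorem setIntegral_Icc_of_step {E : Type*} [NormedAddCommGroup E] [NormedSpace ℝ E]
    [CompleteSpace E] {f : ℝ → E} {a b c : ℝ} {u v : E} (hab : a ≤ b) (hbc : b ≤ c)
    (hu : ∀ t, a ≤ t → t ≤ b → f t = u) (hv : ∀ t, b < t → t ≤ c → f t = v) :
    ∫ t in Icc a c, f t = (b - a) • u + (c - b) • v := by
  have hdisj : Disjoint (Icc a b) (Ioc b c) :=
    disjoint_left.2 fun t ht ht' => not_lt.2 ht.2 ht'.1
  have hu' : EqOn f (fun _ => u) (Icc a b) := fun t ht => hu t ht.1 ht.2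
  have hv' : EqOn f (fun _ => v) (Ioc b c) := fun t ht => hv t ht.1 ht.2
  rw [← Icc_union_Ioc_eq_Icc hab hbc,
    setIntegral_union hdisj measurableSet_Ioc
      ((integrableOn_const measure_Icc_lt_top.ne).congr_fun hu'.symm measurableSet_Icc)
      ((integrableOn_const measure_Ioc_lt_top.ne).congr_fun hv'.symm measurableSet_Ioc),
    setIntegral_congr_fun measurableSet_Icc hu', setIntegral_congr_fun measurableSet_Ioc hv',
    setIntegral_const, setIntegral_const, Real.volume_real_Icc_of_le hab,
    Real.volume_real_Ioc_of_le hbc]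

theorem setIntegral_mul_conj_of_norm_eq_one {α : Type*} [MeasurableSpace α] {μ : Measure α}
    {s : Set α} (hs : MeasurableSet s) {f : α → ℂ} (hf : ∀ t ∈ s, ‖f t‖ = 1) :
    ∫ t in s, f t * conj (f t) ∂μ = μ.real s := by
  rw [setIntegral_congr_fun hs (g := fun _ => (1 : ℂ)) fun t ht => by
    simp [Complex.mul_conj, Complex.normSq_eq_norm_sq, hf t ht]]
  simp

/-- Sharpness example for the Grüss inequality: for the function `f = g` on `[0,1]` taking the
value `-1` on `[0, 1/2]` and `1` on `(1/2, 1]`, with `x' = y' = 1` and `x = y = -1`, the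
condition holds and the Grüss functional attains the value `1 = (1/4)|x' − x||y' − y|`. -/
theorem gruss_sharpness_example (f g : ℝ → ℂ)
    (hfg : g = f)
    (hf₁ : ∀ t : ℝ, 0 ≤ t → t ≤ 1 / 2 → f t = -1)
    (hf₂ : ∀ t : ℝ, 1 / 2 < t → t ≤ 1 → f t = 1) :
    (0 ≤ ∫ t in Set.Icc (0 : ℝ) 1, (((1 : ℂ) - f t) * (starRingEnd ℂ) (f t - (-1))).re) ∧
      ‖(∫ t in Set.Icc (0 : ℝ) 1, f t * (starRingEnd ℂ) (g t)) -
          (∫ t in Set.Icc (0 : ℝ) 1, f t) * (starRingEnd ℂ) (∫ t in Set.Icc (0 : ℝ) 1, g t)‖ =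
        1 ∧
      (1 : ℝ) = 4⁻¹ * ‖(1 : ℂ) - (-1)‖ * ‖(1 : ℂ) - (-1)‖ := by
  subst hfg
  have hunit : ∀ t ∈ Icc (0 : ℝ) 1, ‖g t‖ = 1 := by
    rintro t ⟨h0, h1⟩
    rcases le_or_gt t (1 / 2) with h | h
    · simp [hf₁ t h0 h]
    · simp [hf₂ t h h1]
  have hmean : ∫ t in Icc (0 : ℝ) 1, g t = 0 := by
    rw [setIntegral_Icc_of_step (by norm_num) (by norm_num) hf₁ hf₂]
    norm_num
  refine ⟨setIntegral_nonneg measurableSet_Icc fun t ht => ?_, ?_, by norm_num⟩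
  · rw [Complex.re_sub_mul_conj_sub_neg, hunit t ht]
    norm_num
  · rw [setIntegral_mul_conj_of_norm_eq_one measurableSet_Icc hunit, hmean]
    simp
end
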